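/- arXiv:0806.2903 — 2 statements merged into one kernel-verified Lean document; each statement's English description precedes it below -/
import Mathlib

section
/- In a weak bialgebra H, the target base algebra H_t = ε_t(H) is a unital subalgebra of H and a left coideal, i.e., Δ(H_t) ⊆ H ⊗ H_t; the source base algebra H_s = ε_s(H) is a unital subalgebra and a right coideal, i.e., Δ(H_s) ⊆ H_s ⊗ H; and H_t and H_s commute elementwise: xy = yx for all x ∈ H_t and y ∈ H_s. -/
open TensorProduct LinearMap

namespace WeakBialgebraPaper

variable (k H : Type*) [CommRing k] [Ring H] [Algebra k H] [Coalgebra k H]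

/-- `x ⊗ y ↦ ε (x * y)`. -/
noncomputable def counitMul : H ⊗[k] H →ₗ[k] k :=
  Coalgebra.counit ∘ₗ LinearMap.mul' k H

/-- ε∘μ∘(μ⊗id) : (H⊗H)⊗H → k -/
noncomputable def weakCounitLHS : (H ⊗[k] H) ⊗[k] H →ₗ[k] k :=
  Coalgebra.counit ∘ₗ LinearMap.mul' k H ∘ₗ LinearMap.rTensor H (LinearMap.mul' k H)

/-- (ε⊗ε)∘(μ⊗μ)∘(id⊗Δ⊗id), with `Δ' = d` inserted in the middle slot. -/
noncomputable def weakCounitRHS (d : H →ₗ[k] H ⊗[k] H) : (H ⊗[k] H) ⊗[k] H →ₗ[k] k :=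
  (TensorProduct.lid k k).toLinearMap
    ∘ₗ TensorProduct.map (counitMul k H) (counitMul k H)
    ∘ₗ (TensorProduct.assoc k (H ⊗[k] H) H H).toLinearMap
    ∘ₗ LinearMap.rTensor H (TensorProduct.assoc k H H H).symm.toLinearMap
    ∘ₗ LinearMap.rTensor H (LinearMap.lTensor H d)

/-- (id⊗μ'⊗id)∘(Δ⊗Δ) applied to 1⊗1, with multiplication `m` in the middle. -/
noncomputable def weakUnitRHS (m : H ⊗[k] H →ₗ[k] H) : (H ⊗[k] H) ⊗[k] H :=
  (LinearMap.rTensor H (LinearMap.lTensor H m))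
    ((LinearMap.rTensor H (TensorProduct.assoc k H H H).toLinearMap)
      ((TensorProduct.assoc k (H ⊗[k] H) H H).symm
        (Coalgebra.comul (R := k) (1 : H) ⊗ₜ[k] Coalgebra.comul (R := k) (1 : H))))

/-- A weak bialgebra in the sense of Böhm–Nill–Szlachányi. -/
class WeakBialgebra : Prop where
  comul_mul : ∀ x y : H, Coalgebra.comul (R := k) (x * y) = Coalgebra.comul x * Coalgebra.comul y
  weak_counit :
    weakCounitLHS k H = weakCounitRHS k H Coalgebra.comul
  weak_counit_op :
    weakCounitLHS k H =
      weakCounitRHS k H ((TensorProduct.comm k H H).toLinearMap ∘ₗ Coalgebra.comul)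
  weak_unit :
    LinearMap.rTensor H (Coalgebra.comul (R := k)) (Coalgebra.comul (R := k) (1 : H)) =
      weakUnitRHS k H (LinearMap.mul' k H)
  weak_unit_op :
    LinearMap.rTensor H (Coalgebra.comul (R := k)) (Coalgebra.comul (R := k) (1 : H)) =
      weakUnitRHS k H (LinearMap.mul' k H ∘ₗ (TensorProduct.comm k H H).toLinearMap)

/-- The target counital map `ε_t(x) = ε(1' x) 1''`. -/
noncomputable def εt : H →ₗ[k] H :=
  (TensorProduct.rid k H).toLinearMap
    ∘ₗ LinearMap.lTensor H (counitMul k H)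
    ∘ₗ (TensorProduct.assoc k H H H).toLinearMap
    ∘ₗ LinearMap.rTensor H (TensorProduct.comm k H H).toLinearMap
    ∘ₗ TensorProduct.mk k (H ⊗[k] H) H (Coalgebra.comul (R := k) (1 : H))

/-- The source counital map `ε_s(x) = 1' ε(x 1'')`. -/
noncomputable def εs : H →ₗ[k] H :=
  (TensorProduct.rid k H).toLinearMap
    ∘ₗ LinearMap.lTensor H (counitMul k H ∘ₗ (TensorProduct.comm k H H).toLinearMap)
    ∘ₗ (TensorProduct.assoc k H H H).toLinearMap
    ∘ₗ TensorProduct.mk k (H ⊗[k] H) H (Coalgebra.comul (R := k) (1 : H))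

end WeakBialgebraPaper
namespace WeakBialgebraPaper

section Lemmas

open Coalgebra

variable {k H : Type*} [CommRing k] [Ring H] [Algebra k H] [Coalgebra k H]

lemma counitMul_tmul (x y : H) :
    counitMul k H (x ⊗ₜ[k] y) = Coalgebra.counit (R := k) (x * y) := by
  simp [counitMul, LinearMap.mul'_apply]

variable {s : Finset (H × H)}

lemma εt_apply (hs : Coalgebra.comul (R := k) (1 : H) = ∑ p ∈ s, p.1 ⊗ₜ[k] p.2) (x : H) :
    εt k H x = ∑ p ∈ s, Coalgebra.counit (R := k) (p.1 * x) • p.2 := by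
  simp only [εt, LinearMap.coe_comp, LinearEquiv.coe_coe, Function.comp_apply,
    TensorProduct.mk_apply, hs]
  rw [TensorProduct.sum_tmul]
  simp only [map_sum, LinearMap.rTensor_tmul, LinearEquiv.coe_coe, TensorProduct.comm_tmul,
    TensorProduct.assoc_tmul, LinearMap.lTensor_tmul, counitMul_tmul, TensorProduct.rid_tmul]

lemma εs_apply (hs : Coalgebra.comul (R := k) (1 : H) = ∑ p ∈ s, p.1 ⊗ₜ[k] p.2) (x : H) :
    εs k H x = ∑ p ∈ s, Coalgebra.counit (R := k) (x * p.2) • p.1 := by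
  simp only [εs, LinearMap.coe_comp, LinearEquiv.coe_coe, Function.comp_apply,
    TensorProduct.mk_apply, hs]
  rw [TensorProduct.sum_tmul]
  simp only [map_sum, TensorProduct.assoc_tmul, LinearMap.lTensor_tmul, LinearMap.coe_comp,
    LinearEquiv.coe_coe, Function.comp_apply, TensorProduct.comm_tmul, counitMul_tmul,
    TensorProduct.rid_tmul]

variable [WeakBialgebra k H]

set_option synthInstance.maxHeartbeats 400000 in
lemma comul_one_rep (hs : Coalgebra.comul (R := k) (1 : H) = ∑ p ∈ s, p.1 ⊗ₜ[k] p.2) :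
    ∑ p ∈ s, (Coalgebra.comul (R := k) p.1) ⊗ₜ[k] p.2
      = ∑ p ∈ s, ∑ q ∈ s, (p.1 ⊗ₜ[k] (p.2 * q.1)) ⊗ₜ[k] q.2 := by
  have h1 : LinearMap.rTensor H (Coalgebra.comul (R := k)) (Coalgebra.comul (R := k) (1 : H))
      = ∑ p ∈ s, (Coalgebra.comul (R := k) p.1) ⊗ₜ[k] p.2 := by
    rw [hs, map_sum]
    simp only [LinearMap.rTensor_tmul]
  rw [← h1, WeakBialgebra.weak_unit (k := k) (H := H), weakUnitRHS, hs]
  rw [TensorProduct.sum_tmul]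
  simp only [TensorProduct.tmul_sum, map_sum, TensorProduct.assoc_symm_tmul,
    LinearMap.rTensor_tmul, LinearEquiv.coe_coe, TensorProduct.assoc_tmul,
    LinearMap.lTensor_tmul, LinearMap.mul'_apply]

set_option synthInstance.maxHeartbeats 400000 in
lemma comul_one_rep' (hs : Coalgebra.comul (R := k) (1 : H) = ∑ p ∈ s, p.1 ⊗ₜ[k] p.2) :
    ∑ p ∈ s, (Coalgebra.comul (R := k) p.1) ⊗ₜ[k] p.2
      = ∑ p ∈ s, ∑ q ∈ s, (p.1 ⊗ₜ[k] (q.1 * p.2)) ⊗ₜ[k] q.2 := by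
  have h1 : LinearMap.rTensor H (Coalgebra.comul (R := k)) (Coalgebra.comul (R := k) (1 : H))
      = ∑ p ∈ s, (Coalgebra.comul (R := k) p.1) ⊗ₜ[k] p.2 := by
    rw [hs, map_sum]
    simp only [LinearMap.rTensor_tmul]
  rw [← h1, WeakBialgebra.weak_unit_op (k := k) (H := H), weakUnitRHS, hs]
  rw [TensorProduct.sum_tmul]
  simp only [TensorProduct.tmul_sum, map_sum, TensorProduct.assoc_symm_tmul,
    LinearMap.rTensor_tmul, LinearEquiv.coe_coe, TensorProduct.assoc_tmul,
    LinearMap.lTensor_tmul, LinearMap.coe_comp, Function.comp_apply,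
    TensorProduct.comm_tmul, LinearMap.mul'_apply]

lemma comul_one_rep_l (hs : Coalgebra.comul (R := k) (1 : H) = ∑ p ∈ s, p.1 ⊗ₜ[k] p.2) :
    ∑ p ∈ s, p.1 ⊗ₜ[k] (Coalgebra.comul (R := k) p.2)
      = ∑ p ∈ s, ∑ q ∈ s, p.1 ⊗ₜ[k] ((p.2 * q.1) ⊗ₜ[k] q.2) := by
  have h1 : LinearMap.lTensor H (Coalgebra.comul (R := k)) (Coalgebra.comul (R := k) (1 : H))
      = ∑ p ∈ s, p.1 ⊗ₜ[k] (Coalgebra.comul (R := k) p.2) := by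
    rw [hs, map_sum]
    simp only [LinearMap.lTensor_tmul]
  have h2 : LinearMap.rTensor H (Coalgebra.comul (R := k)) (Coalgebra.comul (R := k) (1 : H))
      = ∑ p ∈ s, (Coalgebra.comul (R := k) p.1) ⊗ₜ[k] p.2 := by
    rw [hs, map_sum]
    simp only [LinearMap.rTensor_tmul]
  have h3 := Coalgebra.coassoc_apply (R := k) (A := H) (1 : H)
  rw [← h1, ← h3, h2, comul_one_rep hs, map_sum]
  simp only [map_sum, TensorProduct.assoc_tmul]

lemma comul_one_rep_l' (hs : Coalgebra.comul (R := k) (1 : H) = ∑ p ∈ s, p.1 ⊗ₜ[k] p.2) :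
    ∑ p ∈ s, p.1 ⊗ₜ[k] (Coalgebra.comul (R := k) p.2)
      = ∑ p ∈ s, ∑ q ∈ s, p.1 ⊗ₜ[k] ((q.1 * p.2) ⊗ₜ[k] q.2) := by
  have h1 : LinearMap.lTensor H (Coalgebra.comul (R := k)) (Coalgebra.comul (R := k) (1 : H))
      = ∑ p ∈ s, p.1 ⊗ₜ[k] (Coalgebra.comul (R := k) p.2) := by
    rw [hs, map_sum]
    simp only [LinearMap.lTensor_tmul]
  have h2 : LinearMap.rTensor H (Coalgebra.comul (R := k)) (Coalgebra.comul (R := k) (1 : H))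
      = ∑ p ∈ s, (Coalgebra.comul (R := k) p.1) ⊗ₜ[k] p.2 := by
    rw [hs, map_sum]
    simp only [LinearMap.rTensor_tmul]
  have h3 := Coalgebra.coassoc_apply (R := k) (A := H) (1 : H)
  rw [← h1, ← h3, h2, comul_one_rep' hs, map_sum]
  simp only [map_sum, TensorProduct.assoc_tmul]

lemma comul_εt (hs : Coalgebra.comul (R := k) (1 : H) = ∑ p ∈ s, p.1 ⊗ₜ[k] p.2) (x : H) :
    Coalgebra.comul (R := k) (εt k H x)
      = Coalgebra.comul (R := k) (1 : H) * ((εt k H x) ⊗ₜ[k] (1 : H)) := by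
  have hF := congrArg (⇑((TensorProduct.lid k (H ⊗[k] H)).toLinearMap
      ∘ₗ LinearMap.rTensor (H ⊗[k] H)
        ((Coalgebra.counit (R := k)) ∘ₗ LinearMap.mulRight k x))) (comul_one_rep_l' hs)
  simp only [map_sum, LinearMap.coe_comp, LinearEquiv.coe_coe, Function.comp_apply,
    LinearMap.rTensor_tmul, LinearMap.mulRight_apply, TensorProduct.lid_tmul] at hF
  have hL : Coalgebra.comul (R := k) (εt k H x)
      = ∑ p ∈ s, Coalgebra.counit (R := k) (p.1 * x) • Coalgebra.comul (R := k) p.2 := by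
    rw [εt_apply hs x, map_sum]
    simp only [map_smul]
  have hR : Coalgebra.comul (R := k) (1 : H) * ((εt k H x) ⊗ₜ[k] (1 : H))
      = ∑ p ∈ s, ∑ q ∈ s,
          Coalgebra.counit (R := k) (p.1 * x) • ((q.1 * p.2) ⊗ₜ[k] q.2) := by
    rw [εt_apply hs x, hs, Finset.sum_mul]
    simp only [TensorProduct.sum_tmul, TensorProduct.smul_tmul', Finset.mul_sum,
      mul_smul_comm, Algebra.TensorProduct.tmul_mul_tmul, mul_one]
    exact Finset.sum_comm
  rw [hL, hR]
  exact hF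

lemma comul_εt' (hs : Coalgebra.comul (R := k) (1 : H) = ∑ p ∈ s, p.1 ⊗ₜ[k] p.2) (x : H) :
    Coalgebra.comul (R := k) (εt k H x)
      = ((εt k H x) ⊗ₜ[k] (1 : H)) * Coalgebra.comul (R := k) (1 : H) := by
  have hF := congrArg (⇑((TensorProduct.lid k (H ⊗[k] H)).toLinearMap
      ∘ₗ LinearMap.rTensor (H ⊗[k] H)
        ((Coalgebra.counit (R := k)) ∘ₗ LinearMap.mulRight k x))) (comul_one_rep_l hs)
  simp only [map_sum, LinearMap.coe_comp, LinearEquiv.coe_coe, Function.comp_apply,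
    LinearMap.rTensor_tmul, LinearMap.mulRight_apply, TensorProduct.lid_tmul] at hF
  have hL : Coalgebra.comul (R := k) (εt k H x)
      = ∑ p ∈ s, Coalgebra.counit (R := k) (p.1 * x) • Coalgebra.comul (R := k) p.2 := by
    rw [εt_apply hs x, map_sum]
    simp only [map_smul]
  have hR : ((εt k H x) ⊗ₜ[k] (1 : H)) * Coalgebra.comul (R := k) (1 : H)
      = ∑ p ∈ s, ∑ q ∈ s,
          Coalgebra.counit (R := k) (p.1 * x) • ((p.2 * q.1) ⊗ₜ[k] q.2) := by
    rw [εt_apply hs x, hs, Finset.mul_sum]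
    simp only [TensorProduct.sum_tmul, TensorProduct.smul_tmul', Finset.sum_mul,
      smul_mul_assoc, Algebra.TensorProduct.tmul_mul_tmul, one_mul]
    exact Finset.sum_comm
  rw [hL, hR]
  exact hF

lemma comul_εs (hs : Coalgebra.comul (R := k) (1 : H) = ∑ p ∈ s, p.1 ⊗ₜ[k] p.2) (x : H) :
    Coalgebra.comul (R := k) (εs k H x)
      = Coalgebra.comul (R := k) (1 : H) * ((1 : H) ⊗ₜ[k] (εs k H x)) := by
  have hF := congrArg (⇑((TensorProduct.rid k (H ⊗[k] H)).toLinearMap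
      ∘ₗ LinearMap.lTensor (H ⊗[k] H)
        ((Coalgebra.counit (R := k)) ∘ₗ LinearMap.mulLeft k x))) (comul_one_rep hs)
  simp only [map_sum, LinearMap.coe_comp, LinearEquiv.coe_coe, Function.comp_apply,
    LinearMap.lTensor_tmul, LinearMap.mulLeft_apply, TensorProduct.rid_tmul] at hF
  have hL : Coalgebra.comul (R := k) (εs k H x)
      = ∑ p ∈ s, Coalgebra.counit (R := k) (x * p.2) • Coalgebra.comul (R := k) p.1 := by
    rw [εs_apply hs x, map_sum]
    simp only [map_smul]
  have hR : Coalgebra.comul (R := k) (1 : H) * ((1 : H) ⊗ₜ[k] (εs k H x))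
      = ∑ p ∈ s, ∑ q ∈ s,
          Coalgebra.counit (R := k) (x * q.2) • (p.1 ⊗ₜ[k] (p.2 * q.1)) := by
    rw [εs_apply hs x, hs, Finset.sum_mul]
    simp only [TensorProduct.tmul_sum, TensorProduct.tmul_smul, Finset.mul_sum,
      mul_smul_comm, Algebra.TensorProduct.tmul_mul_tmul, mul_one]
  rw [hL, hR]
  exact hF

lemma comul_εs' (hs : Coalgebra.comul (R := k) (1 : H) = ∑ p ∈ s, p.1 ⊗ₜ[k] p.2) (x : H) :
    Coalgebra.comul (R := k) (εs k H x)
      = ((1 : H) ⊗ₜ[k] (εs k H x)) * Coalgebra.comul (R := k) (1 : H) := by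
  have hF := congrArg (⇑((TensorProduct.rid k (H ⊗[k] H)).toLinearMap
      ∘ₗ LinearMap.lTensor (H ⊗[k] H)
        ((Coalgebra.counit (R := k)) ∘ₗ LinearMap.mulLeft k x))) (comul_one_rep' hs)
  simp only [map_sum, LinearMap.coe_comp, LinearEquiv.coe_coe, Function.comp_apply,
    LinearMap.lTensor_tmul, LinearMap.mulLeft_apply, TensorProduct.rid_tmul] at hF
  have hL : Coalgebra.comul (R := k) (εs k H x)
      = ∑ p ∈ s, Coalgebra.counit (R := k) (x * p.2) • Coalgebra.comul (R := k) p.1 := by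
    rw [εs_apply hs x, map_sum]
    simp only [map_smul]
  have hR : ((1 : H) ⊗ₜ[k] (εs k H x)) * Coalgebra.comul (R := k) (1 : H)
      = ∑ p ∈ s, ∑ q ∈ s,
          Coalgebra.counit (R := k) (x * q.2) • (p.1 ⊗ₜ[k] (q.1 * p.2)) := by
    rw [εs_apply hs x, hs, Finset.mul_sum]
    simp only [TensorProduct.tmul_sum, TensorProduct.tmul_smul, Finset.sum_mul,
      smul_mul_assoc, Algebra.TensorProduct.tmul_mul_tmul, one_mul]
  rw [hL, hR]
  exact hF

lemma comul_one_t (hs : Coalgebra.comul (R := k) (1 : H) = ∑ p ∈ s, p.1 ⊗ₜ[k] p.2) :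
    Coalgebra.comul (R := k) (1 : H) = ∑ p ∈ s, p.1 ⊗ₜ[k] (εt k H p.2) := by
  have hF := congrArg (⇑(LinearMap.rTensor H ((TensorProduct.rid k H).toLinearMap
      ∘ₗ LinearMap.lTensor H (Coalgebra.counit (R := k))))) (comul_one_rep' hs)
  simp only [map_sum, LinearMap.rTensor_tmul, LinearMap.coe_comp, LinearEquiv.coe_coe,
    Function.comp_apply, LinearMap.lTensor_tmul, TensorProduct.rid_tmul,
    Coalgebra.lTensor_counit_comul, one_smul] at hF
  rw [hs]
  rw [hF]
  refine Finset.sum_congr rfl fun p _ => ?_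
  rw [εt_apply hs p.2, TensorProduct.tmul_sum]
  refine Finset.sum_congr rfl fun q _ => ?_
  rw [TensorProduct.tmul_smul, TensorProduct.smul_tmul']

lemma comul_one_s (hs : Coalgebra.comul (R := k) (1 : H) = ∑ p ∈ s, p.1 ⊗ₜ[k] p.2) :
    Coalgebra.comul (R := k) (1 : H) = ∑ p ∈ s, (εs k H p.1) ⊗ₜ[k] p.2 := by
  have hF := congrArg (⇑(LinearMap.rTensor H ((TensorProduct.rid k H).toLinearMap
      ∘ₗ LinearMap.lTensor H (Coalgebra.counit (R := k))))) (comul_one_rep' hs)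
  simp only [map_sum, LinearMap.rTensor_tmul, LinearMap.coe_comp, LinearEquiv.coe_coe,
    Function.comp_apply, LinearMap.lTensor_tmul, TensorProduct.rid_tmul,
    Coalgebra.lTensor_counit_comul, one_smul] at hF
  rw [hs, hF, Finset.sum_comm]
  refine Finset.sum_congr rfl fun q _ => ?_
  rw [εs_apply hs q.1, TensorProduct.sum_tmul]

lemma εt_one (hs : Coalgebra.comul (R := k) (1 : H) = ∑ p ∈ s, p.1 ⊗ₜ[k] p.2) :
    εt k H (1 : H) = 1 := by
  have h := Coalgebra.rTensor_counit_comul (R := k) (A := H) (1 : H)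
  rw [hs, map_sum] at h
  have h2 := congrArg (⇑(TensorProduct.lid k H)) h
  simp only [map_sum, LinearMap.rTensor_tmul, TensorProduct.lid_tmul, one_smul] at h2
  rw [εt_apply hs 1]
  simpa only [mul_one] using h2

lemma εs_one (hs : Coalgebra.comul (R := k) (1 : H) = ∑ p ∈ s, p.1 ⊗ₜ[k] p.2) :
    εs k H (1 : H) = 1 := by
  have h := Coalgebra.lTensor_counit_comul (R := k) (A := H) (1 : H)
  rw [hs, map_sum] at h
  have h2 := congrArg (⇑(TensorProduct.rid k H)) h
  simp only [map_sum, LinearMap.lTensor_tmul, TensorProduct.rid_tmul, one_smul] at h2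
  rw [εs_apply hs 1]
  simpa only [one_mul] using h2

lemma eq_εt_of (hs : Coalgebra.comul (R := k) (1 : H) = ∑ p ∈ s, p.1 ⊗ₜ[k] p.2) {z : H}
    (h : Coalgebra.comul (R := k) z
      = Coalgebra.comul (R := k) (1 : H) * (z ⊗ₜ[k] (1 : H))) :
    εt k H z = z := by
  have h1 : Coalgebra.comul (R := k) z = ∑ p ∈ s, (p.1 * z) ⊗ₜ[k] p.2 := by
    rw [h, hs, Finset.sum_mul]
    simp only [Algebra.TensorProduct.tmul_mul_tmul, mul_one]
  have h2 := Coalgebra.rTensor_counit_comul (R := k) (A := H) z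
  rw [h1, map_sum] at h2
  have h3 := congrArg (⇑(TensorProduct.lid k H)) h2
  simp only [map_sum, LinearMap.rTensor_tmul, TensorProduct.lid_tmul, one_smul] at h3
  rw [εt_apply hs z]
  exact h3

lemma eq_εs_of (hs : Coalgebra.comul (R := k) (1 : H) = ∑ p ∈ s, p.1 ⊗ₜ[k] p.2) {z : H}
    (h : Coalgebra.comul (R := k) z
      = ((1 : H) ⊗ₜ[k] z) * Coalgebra.comul (R := k) (1 : H)) :
    εs k H z = z := by
  have h1 : Coalgebra.comul (R := k) z = ∑ p ∈ s, p.1 ⊗ₜ[k] (z * p.2) := by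
    rw [h, hs, Finset.mul_sum]
    simp only [Algebra.TensorProduct.tmul_mul_tmul, one_mul]
  have h2 := Coalgebra.lTensor_counit_comul (R := k) (A := H) z
  rw [h1, map_sum] at h2
  have h3 := congrArg (⇑(TensorProduct.rid k H)) h2
  simp only [map_sum, LinearMap.lTensor_tmul, TensorProduct.rid_tmul, one_smul] at h3
  rw [εs_apply hs z]
  exact h3

lemma comul_one_mul (w : H) :
    Coalgebra.comul (R := k) (1 : H) * Coalgebra.comul (R := k) w
      = Coalgebra.comul (R := k) w := by
  rw [← WeakBialgebra.comul_mul (k := k) (H := H) 1 w, one_mul]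

lemma comul_mul_one (w : H) :
    Coalgebra.comul (R := k) w * Coalgebra.comul (R := k) (1 : H)
      = Coalgebra.comul (R := k) w := by
  rw [← WeakBialgebra.comul_mul (k := k) (H := H) w 1, mul_one]

lemma mul_stable_t {z w : H}
    (hz1 : Coalgebra.comul (R := k) z
      = Coalgebra.comul (R := k) (1 : H) * (z ⊗ₜ[k] (1 : H)))
    (hz2 : Coalgebra.comul (R := k) z
      = (z ⊗ₜ[k] (1 : H)) * Coalgebra.comul (R := k) (1 : H))
    (hw1 : Coalgebra.comul (R := k) w
      = Coalgebra.comul (R := k) (1 : H) * (w ⊗ₜ[k] (1 : H)))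
    (hw2 : Coalgebra.comul (R := k) w
      = (w ⊗ₜ[k] (1 : H)) * Coalgebra.comul (R := k) (1 : H)) :
    Coalgebra.comul (R := k) (z * w)
      = Coalgebra.comul (R := k) (1 : H) * ((z * w) ⊗ₜ[k] (1 : H)) ∧
    Coalgebra.comul (R := k) (z * w)
      = ((z * w) ⊗ₜ[k] (1 : H)) * Coalgebra.comul (R := k) (1 : H) := by
  have htt : (z ⊗ₜ[k] (1 : H)) * (w ⊗ₜ[k] (1 : H)) = (z * w) ⊗ₜ[k] (1 : H) := by
    rw [Algebra.TensorProduct.tmul_mul_tmul, mul_one]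
  constructor
  · rw [WeakBialgebra.comul_mul (k := k) (H := H) z w, hz2, mul_assoc, comul_one_mul, hw1,
      ← mul_assoc, ← hz2, hz1, mul_assoc, htt]
  · rw [WeakBialgebra.comul_mul (k := k) (H := H) z w, hw1, ← mul_assoc, comul_mul_one, hz2,
      mul_assoc, ← hw1, hw2, ← mul_assoc, htt]

lemma mul_stable_s {z w : H}
    (hz1 : Coalgebra.comul (R := k) z
      = Coalgebra.comul (R := k) (1 : H) * ((1 : H) ⊗ₜ[k] z))
    (hz2 : Coalgebra.comul (R := k) z
      = ((1 : H) ⊗ₜ[k] z) * Coalgebra.comul (R := k) (1 : H))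
    (hw1 : Coalgebra.comul (R := k) w
      = Coalgebra.comul (R := k) (1 : H) * ((1 : H) ⊗ₜ[k] w))
    (hw2 : Coalgebra.comul (R := k) w
      = ((1 : H) ⊗ₜ[k] w) * Coalgebra.comul (R := k) (1 : H)) :
    Coalgebra.comul (R := k) (z * w)
      = Coalgebra.comul (R := k) (1 : H) * ((1 : H) ⊗ₜ[k] (z * w)) ∧
    Coalgebra.comul (R := k) (z * w)
      = ((1 : H) ⊗ₜ[k] (z * w)) * Coalgebra.comul (R := k) (1 : H) := by
  have htt : ((1 : H) ⊗ₜ[k] z) * ((1 : H) ⊗ₜ[k] w) = (1 : H) ⊗ₜ[k] (z * w) := by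
    rw [Algebra.TensorProduct.tmul_mul_tmul, mul_one]
  constructor
  · rw [WeakBialgebra.comul_mul (k := k) (H := H) z w, hz2, mul_assoc, comul_one_mul, hw1,
      ← mul_assoc, ← hz2, hz1, mul_assoc, htt]
  · rw [WeakBialgebra.comul_mul (k := k) (H := H) z w, hw1, ← mul_assoc, comul_mul_one, hz2,
      mul_assoc, ← hw1, hw2, ← mul_assoc, htt]

end Lemmas

end WeakBialgebraPaper


open WeakBialgebraPaper in
/-- In a weak bialgebra, the target base algebra `H_t = ε_t(H)` is a unital subalgebra
and a left coideal, the source base algebra `H_s = ε_s(H)` is a unital subalgebra and a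
right coideal, and the two base algebras commute elementwise. -/
theorem base_algebras (k H : Type*) [Field k] [Ring H] [Algebra k H]
    [Coalgebra k H] [WeakBialgebra k H] :
    -- `H_t` is a unital subalgebra
    ((1 : H) ∈ LinearMap.range (εt k H) ∧
      ∀ x y : H, x ∈ LinearMap.range (εt k H) → y ∈ LinearMap.range (εt k H) →
        x * y ∈ LinearMap.range (εt k H)) ∧
    -- `Δ(H_t) ⊆ H ⊗ H_t`
    (∀ x : H, x ∈ LinearMap.range (εt k H) →
      Coalgebra.comul (R := k) x ∈
        LinearMap.range (LinearMap.lTensor H (LinearMap.range (εt k H)).subtype)) ∧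
    -- `H_s` is a unital subalgebra
    ((1 : H) ∈ LinearMap.range (εs k H) ∧
      ∀ x y : H, x ∈ LinearMap.range (εs k H) → y ∈ LinearMap.range (εs k H) →
        x * y ∈ LinearMap.range (εs k H)) ∧
    -- `Δ(H_s) ⊆ H_s ⊗ H`
    (∀ x : H, x ∈ LinearMap.range (εs k H) →
      Coalgebra.comul (R := k) x ∈
        LinearMap.range (LinearMap.rTensor H (LinearMap.range (εs k H)).subtype)) ∧
    -- `H_t` and `H_s` commute elementwise
    (∀ x y : H, x ∈ LinearMap.range (εt k H) → y ∈ LinearMap.range (εs k H) →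
      x * y = y * x) := by

  classical
  obtain ⟨s, hs⟩ := TensorProduct.exists_finset (R := k) (Coalgebra.comul (R := k) (1 : H))
  have hPt : ∀ u : H,
      Coalgebra.comul (R := k) (εt k H u)
        = Coalgebra.comul (R := k) (1 : H) * ((εt k H u) ⊗ₜ[k] (1 : H)) ∧
      Coalgebra.comul (R := k) (εt k H u)
        = ((εt k H u) ⊗ₜ[k] (1 : H)) * Coalgebra.comul (R := k) (1 : H) :=
    fun u => ⟨comul_εt hs u, comul_εt' hs u⟩
  have hPs : ∀ u : H,
      Coalgebra.comul (R := k) (εs k H u)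
        = Coalgebra.comul (R := k) (1 : H) * ((1 : H) ⊗ₜ[k] (εs k H u)) ∧
      Coalgebra.comul (R := k) (εs k H u)
        = ((1 : H) ⊗ₜ[k] (εs k H u)) * Coalgebra.comul (R := k) (1 : H) :=
    fun u => ⟨comul_εs hs u, comul_εs' hs u⟩
  refine ⟨⟨⟨1, εt_one hs⟩, ?_⟩, ?_, ⟨⟨1, εs_one hs⟩, ?_⟩, ?_, ?_⟩
  · rintro x y ⟨u, rfl⟩ ⟨v, rfl⟩
    exact ⟨εt k H u * εt k H v,
      eq_εt_of hs (mul_stable_t (hPt u).1 (hPt u).2 (hPt v).1 (hPt v).2).1⟩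
  · rintro x ⟨u, rfl⟩
    refine ⟨∑ p ∈ s, (εt k H u * p.1) ⊗ₜ[k]
      (⟨εt k H p.2, ⟨p.2, rfl⟩⟩ : LinearMap.range (εt k H)), ?_⟩
    rw [map_sum, (hPt u).2, comul_one_t hs, Finset.mul_sum]
    refine Finset.sum_congr rfl fun p _ => ?_
    rw [LinearMap.lTensor_tmul, Submodule.coe_subtype,
      Algebra.TensorProduct.tmul_mul_tmul, one_mul]
  · rintro x y ⟨u, rfl⟩ ⟨v, rfl⟩
    exact ⟨εs k H u * εs k H v,
      eq_εs_of hs (mul_stable_s (hPs u).1 (hPs u).2 (hPs v).1 (hPs v).2).2⟩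
  · rintro x ⟨u, rfl⟩
    refine ⟨∑ p ∈ s, (⟨εs k H p.1, ⟨p.1, rfl⟩⟩ : LinearMap.range (εs k H)) ⊗ₜ[k]
      (p.2 * εs k H u), ?_⟩
    rw [map_sum, (hPs u).1, comul_one_s hs, Finset.sum_mul]
    refine Finset.sum_congr rfl fun p _ => ?_
    rw [LinearMap.rTensor_tmul, Submodule.coe_subtype,
      Algebra.TensorProduct.tmul_mul_tmul, mul_one]
  · rintro x y ⟨u, rfl⟩ ⟨v, rfl⟩
    have e1 : Coalgebra.comul (R := k) (εt k H u) = ∑ p ∈ s, (p.1 * εt k H u) ⊗ₜ[k] p.2 := by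
      rw [(hPt u).1, hs, Finset.sum_mul]
      simp only [Algebra.TensorProduct.tmul_mul_tmul, mul_one]
    have e2 : Coalgebra.comul (R := k) (εt k H u) = ∑ p ∈ s, (εt k H u * p.1) ⊗ₜ[k] p.2 := by
      rw [(hPt u).2, hs, Finset.mul_sum]
      simp only [Algebra.TensorProduct.tmul_mul_tmul, one_mul]
    have hx : ∑ p ∈ s, (p.1 * εt k H u) ⊗ₜ[k] p.2
        = ∑ p ∈ s, (εt k H u * p.1) ⊗ₜ[k] p.2 := e1.symm.trans e2
    have hG := congrArg (⇑((TensorProduct.rid k H).toLinearMap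
        ∘ₗ LinearMap.lTensor H
          ((Coalgebra.counit (R := k)) ∘ₗ LinearMap.mulLeft k v))) hx
    simp only [map_sum, LinearMap.coe_comp, LinearEquiv.coe_coe, Function.comp_apply,
      LinearMap.lTensor_tmul, LinearMap.mulLeft_apply, TensorProduct.rid_tmul] at hG
    rw [εs_apply hs v, Finset.mul_sum, Finset.sum_mul]
    simp only [mul_smul_comm, smul_mul_assoc]
    exact hG.symm
end

section
/- Let F ⊣ G: C' → C be an adjoint equivalence between left-autonomous categories. If F is a pivotal strong monoidal functor, then G is pivotal. -/
open CategoryTheory MonoidalCategory Functor.LaxMonoidal Functor.OplaxMonoidal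

namespace SphericalPaper

variable {C : Type*} [Category C] [MonoidalCategory C] [RightRigidCategory C]

/-- The specified dual `X*` of an object (`ev_X : X* ⊗ X ⟶ 𝟙`, `coev_X : 𝟙 ⟶ X ⊗ X*`). -/
noncomputable abbrev du (X : C) : C := (Xᘁ : C)

/-- The right-evaluation `ev̄_X = ev_{X*} ∘ (τ_X ⊗ id_{X*})` induced by a pivotal
structure `τ`. -/
noncomputable def evBar (τ : ∀ X : C, X ≅ du (du X)) (X : C) : X ⊗ du X ⟶ 𝟙_ C :=
  ((τ X).hom ▷ du X) ≫ ε_ (du X) (du (du X))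

/-- The right-coevaluation `coev̄_X = (id_{X*} ⊗ τ_X⁻¹) ∘ coev_{X*}` induced by a
pivotal structure `τ`. -/
noncomputable def coevBar (τ : ∀ X : C, X ≅ du (du X)) (X : C) : 𝟙_ C ⟶ du X ⊗ X :=
  η_ (du X) (du (du X)) ≫ (du X ◁ (τ X).inv)

/-- `τ` is a pivotal structure: a natural isomorphism `X ≅ X**` with
`(τ_X)* = τ_{X*}⁻¹`. -/
noncomputable def IsPivotal (τ : ∀ X : C, X ≅ du (du X)) : Prop :=
  (∀ {X Y : C} (f : X ⟶ Y),
      f ≫ (τ Y).hom = (τ X).hom ≫ rightAdjointMate (rightAdjointMate f)) ∧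
  (∀ X : C, rightAdjointMate (τ X).hom = (τ (du X)).inv)

/-- The left-trace `tr^{(L)}_X(f) = ev_X ∘ (id_{X*} ⊗ f) ∘ coev̄_X`. -/
noncomputable def trL (τ : ∀ X : C, X ≅ du (du X)) {X : C} (f : X ⟶ X) :
    𝟙_ C ⟶ 𝟙_ C :=
  coevBar τ X ≫ (du X ◁ f) ≫ ε_ X (du X)

/-- The right-trace `tr^{(R)}_X(f) = ev̄_X ∘ (f ⊗ id_{X*}) ∘ coev_X`. -/
noncomputable def trR (τ : ∀ X : C, X ≅ du (du X)) {X : C} (f : X ⟶ X) :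
    𝟙_ C ⟶ 𝟙_ C :=
  η_ X (du X) ≫ (f ▷ du X) ≫ evBar τ X

variable {D : Type*} [Category D] [MonoidalCategory D] [RightRigidCategory D]

/-- The canonical comparison morphism `u_X : F(X*) ⟶ (FX)*` for a functor with
lax and oplax monoidal structures between rigid categories. -/
noncomputable def uComp (F : C ⥤ D) [F.LaxMonoidal] [F.OplaxMonoidal] (X : C) :
    F.obj (du X) ⟶ du (F.obj X) :=
  (ρ_ (F.obj (du X))).inv ≫ (F.obj (du X) ◁ η_ (F.obj X) (du (F.obj X))) ≫
    (α_ _ _ _).inv ≫ ((μ F (du X) X ≫ F.map (ε_ X (du X)) ≫ η F) ▷ du (F.obj X)) ≫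
    (λ_ (du (F.obj X))).hom

/-- The explicit inverse `u_X⁻¹ : (FX)* ⟶ F(X*)` of the comparison morphism. -/
noncomputable def uInvComp (F : C ⥤ D) [F.LaxMonoidal] [F.OplaxMonoidal] (X : C) :
    du (F.obj X) ⟶ F.obj (du X) :=
  (ρ_ (du (F.obj X))).inv ≫
    (du (F.obj X) ◁ (ε F ≫ F.map (η_ X (du X)) ≫ δ F X (du X))) ≫
    (α_ _ _ _).inv ≫ (ε_ (F.obj X) (du (F.obj X)) ▷ F.obj (du X)) ≫
    (λ_ (F.obj (du X))).hom

/-- A (strong) monoidal functor between pivotal categories is pivotal if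
`u_{X*} ∘ F(τ_X) = (u_X)* ∘ τ'_{FX}`. -/
noncomputable def IsPivotalFunctor (F : C ⥤ D) [F.LaxMonoidal] [F.OplaxMonoidal]
    (τC : ∀ X : C, X ≅ du (du X)) (τD : ∀ Y : D, Y ≅ du (du Y)) : Prop :=
  ∀ X : C, F.map (τC X).hom ≫ uComp F (du X) =
    (τD (F.obj X)).hom ≫ rightAdjointMate (uComp F X)

end SphericalPaper

namespace SphericalPaper

variable {C : Type*} [Category C] [MonoidalCategory C] [RightRigidCategory C]
variable {D : Type*} [Category D] [MonoidalCategory D] [RightRigidCategory D]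

/-- The comparison morphism `v_Y = η⁻¹_{(GY)*} ∘ G(u_{GY}⁻¹) ∘ G(ε_Y*)` for the right
adjoint `G` of a monoidal equivalence `F ⊣ G`. -/
noncomputable def vComp (F : C ⥤ D) [F.LaxMonoidal] [F.OplaxMonoidal] (G : D ⥤ C)
    (adj : F ⊣ G) [IsIso adj.unit] (Y : D) : G.obj (du Y) ⟶ du (G.obj Y) :=
  G.map (rightAdjointMate (adj.counit.app Y)) ≫ G.map (uInvComp F (G.obj Y)) ≫
    inv (adj.unit.app (du (G.obj Y)))

end SphericalPaper


namespace SphericalPaper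

section Aux

variable {C : Type*} [Category C] [MonoidalCategory C]
variable {D : Type*} [Category D] [MonoidalCategory D]

/-- The image of an exact pairing under a monoidal functor is an exact pairing. -/
@[reducible]
noncomputable def FPairing (F : C ⥤ D) [F.Monoidal] (X Y : C) [ExactPairing X Y] :
    ExactPairing (F.obj X) (F.obj Y) where
  coevaluation' := ε F ≫ F.map (η_ X Y) ≫ δ F X Y
  evaluation' := μ F Y X ≫ F.map (ε_ X Y) ≫ η F
  coevaluation_evaluation' := by
    simp only [MonoidalCategory.whiskerLeft_comp, comp_whiskerRight, Category.assoc]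
    conv_lhs => rw [← Category.id_comp (F.obj Y ◁ δ F X Y),
      ← Functor.Monoidal.μ_δ (F := F) Y (X ⊗ Y)]
    simp only [Category.assoc, μ_natural_right_assoc,
      Functor.OplaxMonoidal.associativity_inv_assoc,
      Functor.Monoidal.whiskerRight_δ_μ_assoc, δ_natural_left_assoc,
      ← F.map_comp_assoc, ExactPairing.coevaluation_evaluation]
    rw [F.map_comp]; simp only [Category.assoc]
    rw [← Functor.LaxMonoidal.right_unitality_assoc, ← Functor.OplaxMonoidal.left_unitality]
  evaluation_coevaluation' := by
    simp only [MonoidalCategory.whiskerLeft_comp, comp_whiskerRight, Category.assoc]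
    conv_lhs => rw [← Category.id_comp (δ F X Y ▷ F.obj X),
      ← Functor.Monoidal.μ_δ (F := F) (X ⊗ Y) X]
    simp only [Category.assoc, μ_natural_left_assoc, Functor.OplaxMonoidal.associativity_assoc,
      Functor.Monoidal.whiskerLeft_δ_μ_assoc, δ_natural_right_assoc,
      ← F.map_comp_assoc, ExactPairing.evaluation_coevaluation]
    rw [F.map_comp]; simp only [Category.assoc]
    rw [← Functor.LaxMonoidal.left_unitality_assoc, ← Functor.OplaxMonoidal.right_unitality]

lemma FPairing_ev (F : C ⥤ D) [F.Monoidal] (X Y : C) [ExactPairing X Y] :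
    @ExactPairing.evaluation' D _ _ (F.obj X) (F.obj Y) (FPairing F X Y) =
      μ F Y X ≫ F.map (ε_ X Y) ≫ η F := rfl

lemma FPairing_coev (F : C ⥤ D) [F.Monoidal] (X Y : C) [ExactPairing X Y] :
    @ExactPairing.coevaluation' D _ _ (F.obj X) (F.obj Y) (FPairing F X Y) =
      ε F ≫ F.map (η_ X Y) ≫ δ F X Y := rfl

variable [RightRigidCategory C] [RightRigidCategory D]

/-- Transported right dual for images of a monoidal functor. -/
@[reducible]
noncomputable def Fd (F : C ⥤ D) [F.Monoidal] (X : C) : HasRightDual (F.obj X) :=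
  @HasRightDual.mk D _ _ (F.obj X) (F.obj (Xᘁ)) (FPairing F X (Xᘁ))

variable (F : C ⥤ D) [F.Monoidal]

lemma uComp_eq (X : C) :
    uComp F X = @rightAdjointMate D _ _ (F.obj X) (F.obj X) _ (Fd F X) (𝟙 (F.obj X)) := by
  unfold Fd
  simp [uComp, rightAdjointMate, Fd, ExactPairing.evaluation, ExactPairing.coevaluation, FPairing,
    FPairing_ev, FPairing_coev]

lemma uInvComp_eq (X : C) :
    uInvComp F X = @rightAdjointMate D _ _ (F.obj X) (F.obj X) (Fd F X) _ (𝟙 (F.obj X)) := by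
  unfold Fd
  simp [uInvComp, rightAdjointMate, Fd, ExactPairing.evaluation, ExactPairing.coevaluation,
    FPairing, FPairing_ev, FPairing_coev]

omit [RightRigidCategory D] in
lemma map_mate {X Y : C} (f : X ⟶ Y) :
    F.map (fᘁ) = @rightAdjointMate D _ _ (F.obj X) (F.obj Y) (Fd F X) (Fd F Y) (F.map f) := by
  dsimp only [rightAdjointMate, Fd]
  unfold Fd
  simp only [ExactPairing.evaluation, ExactPairing.coevaluation, FPairing, FPairing_ev, FPairing_coev,
    MonoidalCategory.whiskerLeft_comp, comp_whiskerRight, Category.assoc]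
  conv_rhs => rw [← MonoidalCategory.whiskerLeft_comp_assoc (f := δ F X (Xᘁ))
      (g := F.map f ▷ F.obj (Xᘁ)), δ_natural_left]
  simp only [MonoidalCategory.whiskerLeft_comp, Category.assoc]
  conv_rhs => rw [← Category.id_comp (F.obj (Yᘁ) ◁ δ F Y (Xᘁ)),
    ← Functor.Monoidal.μ_δ (F := F) (Yᘁ) (Y ⊗ Xᘁ)]
  simp only [Category.assoc, μ_natural_right_assoc,
    Functor.OplaxMonoidal.associativity_inv_assoc,
    Functor.Monoidal.whiskerRight_δ_μ_assoc, δ_natural_left_assoc,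
    Functor.OplaxMonoidal.left_unitality_hom, Functor.LaxMonoidal.right_unitality_inv_assoc,
    ← F.map_comp]

lemma uComp_uInvComp (X : C) : uComp F X ≫ uInvComp F X = 𝟙 _ := by
  rw [uComp_eq, uInvComp_eq,
    ← @comp_rightAdjointMate D _ _ (F.obj X) (F.obj X) (F.obj X) (Fd F X) _ (Fd F X)
      (𝟙 _) (𝟙 _)]
  simp [@rightAdjointMate_id D _ _ (F.obj X) (Fd F X)]; rfl

lemma uInvComp_uComp (X : C) : uInvComp F X ≫ uComp F X = 𝟙 _ := by
  rw [uComp_eq, uInvComp_eq,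
    ← @comp_rightAdjointMate D _ _ (F.obj X) (F.obj X) (F.obj X) _ (Fd F X) _
      (𝟙 _) (𝟙 _)]
  simp

lemma u_natural {X Y : C} (f : X ⟶ Y) :
    F.map (fᘁ) ≫ uComp F X = uComp F Y ≫ (F.map f)ᘁ := by
  rw [map_mate, uComp_eq, uComp_eq,
    ← @comp_rightAdjointMate D _ _ (F.obj X) (F.obj X) (F.obj Y) _ (Fd F X) (Fd F Y)
      (𝟙 _) (F.map f),
    ← @comp_rightAdjointMate D _ _ (F.obj X) (F.obj Y) (F.obj Y) _ _ (Fd F Y)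
      (F.map f) (𝟙 _)]
  simp

end Aux

end SphericalPaper

open SphericalPaper in
/-- If `F ⊣ G` is an adjoint equivalence of pivotal categories and `F` is a pivotal
strong monoidal functor, then `G` is pivotal (with respect to the comparison
morphisms `v_Y` induced by the adjunction). -/
theorem right_adjoint_of_pivotal_is_pivotal {C D : Type*} [Category C]
    [MonoidalCategory C] [RightRigidCategory C] [Category D] [MonoidalCategory D]
    [RightRigidCategory D]
    (τC : ∀ X : C, X ≅ du (du X)) (hτC : IsPivotal τC)
    (τD : ∀ Y : D, Y ≅ du (du Y)) (hτD : IsPivotal τD)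
    (F : C ⥤ D) [F.Monoidal] (G : D ⥤ C) (adj : F ⊣ G)
    [IsIso adj.unit] [IsIso adj.counit]
    (hF : IsPivotalFunctor F τC τD) :
    ∀ Y : D, G.map (τD Y).hom ≫ vComp F G adj (du Y) =
      (τC (G.obj Y)).hom ≫ rightAdjointMate (vComp F G adj Y) := by
  intro Y
  have hinj : ∀ {A B : C} (a b : A ⟶ B), F.map a = F.map b → a = b := by
    intro A B a b h
    have ha := adj.unit_naturality a
    have hb := adj.unit_naturality b
    rw [h, hb] at ha
    exact ((cancel_mono (adj.unit.app B)).mp ha).symm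
  have hcount : ∀ Z : C, F.map (inv (adj.unit.app Z)) = adj.counit.app (F.obj Z) := fun Z =>
    (F.map_inv _).trans (IsIso.inv_eq_of_hom_inv_id (adj.left_triangle_components Z))
  have hkey : ∀ Z : D, F.map (vComp F G adj Z) =
      adj.counit.app (du Z) ≫ rightAdjointMate (adj.counit.app Z) ≫ uInvComp F (G.obj Z) := by
    intro Z
    simp only [vComp, F.map_comp, hcount, Category.assoc]
    rw [adj.counit_naturality, adj.counit_naturality_assoc]
  apply hinj
  have h1 := u_natural F (vComp F G adj Y)
  have h1' : F.map (rightAdjointMate (vComp F G adj Y)) =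
      uComp F (du (G.obj Y)) ≫ rightAdjointMate (F.map (vComp F G adj Y)) ≫
        uInvComp F (G.obj (du Y)) := by
    rw [← Category.assoc, ← h1, Category.assoc, uComp_uInvComp, Category.comp_id]
  calc F.map (G.map (τD Y).hom ≫ vComp F G adj (du Y))
      = adj.counit.app Y ≫ (τD Y).hom ≫ rightAdjointMate (adj.counit.app (du Y)) ≫
        uInvComp F (G.obj (du Y)) := by
        rw [F.map_comp, hkey, adj.counit_naturality_assoc]
    _ = F.map ((τC (G.obj Y)).hom ≫ rightAdjointMate (vComp F G adj Y)) := by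
        rw [F.map_comp, h1', ← Category.assoc (F.map (τC (G.obj Y)).hom), hF (G.obj Y),
          Category.assoc, ← comp_rightAdjointMate_assoc, hkey Y]
        simp only [Category.assoc]
        rw [uInvComp_uComp]
        simp only [Functor.comp_obj, Functor.id_obj, Category.comp_id]
        have hnat := hτD.1 (adj.counit.app Y)
        simp only [Functor.comp_obj, Functor.id_obj] at hnat
        rw [comp_rightAdjointMate, reassoc_of% hnat]
        simp only [Category.assoc]
end
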